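/- In a two-sided matching instance where all agents have quantile parameter h_i = 0, any stable lottery that is efficient must be integral, i.e., it coincides with a single deterministic stable matching. -/

import Mathlib

open scoped Classical
open Finset

/-- Total probability mass of options strictly worse than `o` under strict preference `p`
(`p u v` means `u` is strictly preferred to `v`). -/
noncomputable def sWorse {O : Type*} [Fintype O] (x : O → ℝ) (p : O → O → Prop) (o : O) : ℝ :=
  ∑ o' ∈ univ.filter (fun o' => p o o'), x o'

/-- Total probability mass of options weakly worse than `o`. -/
noncomputable def wWorse {O : Type*} [Fintype O] (x : O → ℝ) (p : O → O → Prop) (o : O) : ℝ :=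
  ∑ o' ∈ univ.filter (fun o' => p o o' ∨ o' = o), x o'

/-- `x` is a lottery (probability distribution) over the finite set of options. -/
def IsLottery {O : Type*} [Fintype O] (x : O → ℝ) : Prop :=
  (∀ o, 0 ≤ x o) ∧ ∑ o, x o = 1

/-- `o` is the `h`-quantile representative of lottery `x` with respect to strict preference `p`:
for `h = 1` it is the most preferred option with positive probability; for `h < 1` it is the
option whose strictly-worse mass is at most `h` while its weakly-worse mass exceeds `h`. -/
def IsRep {O : Type*} [Fintype O] (x : O → ℝ) (p : O → O → Prop) (h : ℝ) (o : O) : Prop :=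
  (h = 1 ∧ 0 < x o ∧ ∀ o', p o' o → x o' = 0) ∨
  (h < 1 ∧ sWorse x p o ≤ h ∧ h < wWorse x p o)

/-- A doubly stochastic lottery over two-sided matchings. -/
def IsDS {N M : Type*} [Fintype N] [Fintype M] (x : N → M → ℝ) : Prop :=
  (∀ i g, 0 ≤ x i g) ∧ (∀ i, ∑ g, x i g = 1) ∧ (∀ g, ∑ i, x i g = 1)

/-- Stability of a lottery over two-sided matchings: no blocking pair with respect to
quantile representatives. -/
def TwoStable {N M : Type*} [Fintype N] [Fintype M]
    (pN : N → M → M → Prop) (pM : M → N → N → Prop) (hN : N → ℝ) (hM : M → ℝ)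
    (x : N → M → ℝ) : Prop :=
  ∀ i j u v, IsRep (x i) (pN i) (hN i) u → IsRep (fun k => x k j) (pM j) (hM j) v →
    ((pN i u j ∨ u = j) ∨ (pM j v i ∨ v = i))

/-- Lottery `y` Pareto dominates lottery `x` with respect to the quantile representatives of
all agents on both sides. -/
def TwoDom {N M : Type*} [Fintype N] [Fintype M]
    (pN : N → M → M → Prop) (pM : M → N → N → Prop) (hN : N → ℝ) (hM : M → ℝ)
    (y x : N → M → ℝ) : Prop :=
  (∀ i u v, IsRep (y i) (pN i) (hN i) u → IsRep (x i) (pN i) (hN i) v →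
    (pN i u v ∨ u = v)) ∧
  (∀ j u v, IsRep (fun k => y k j) (pM j) (hM j) u →
    IsRep (fun k => x k j) (pM j) (hM j) v → (pM j u v ∨ u = v)) ∧
  ((∃ i u v, IsRep (y i) (pN i) (hN i) u ∧ IsRep (x i) (pN i) (hN i) v ∧ pN i u v) ∨
   (∃ j u v, IsRep (fun k => y k j) (pM j) (hM j) u ∧
      IsRep (fun k => x k j) (pM j) (hM j) v ∧ pM j u v))

/-- Integral stability of a perfect matching `μ`. -/
def IntStable {N M : Type*} (pN : N → M → M → Prop) (pM : M → N → N → Prop)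
    (μ : N ≃ M) : Prop :=
  ∀ i j, ¬ (pN i j (μ i) ∧ pM j i (μ.symm j))

/- With `h = 0` every agent is represented by her least preferred partner of positive
probability. Stability then forces every positive entry `x i j` to be either the row
representative of `i` or the column representative of `j`. If `b` is the best man in the support
of woman `j` and `j` is not the representative of `b`, then `b` represents `j`, so column `j`
and hence row `b` are point masses at `(b, j)`: a contradiction. Hence the row representatives
`u` satisfy `u (b j) = j`, and `u` is a perfect matching. Switching to this matching leaves
every man's representative unchanged and moves every woman's representative up to her best
supported man, so efficiency forces each woman's worst and best supported men to coincide: `x`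
is the matching `u`, which inherits stability. -/

/-- With `Function.swap p` this is the most preferred option of positive weight. -/
def IsWorstSupported {O : Type*} (x : O → ℝ) (p : O → O → Prop) (o : O) : Prop :=
  0 < x o ∧ ∀ o', p o o' → x o' = 0

section Support

variable {O : Type*} {x : O → ℝ} {p : O → O → Prop} {a b o : O}

theorem IsWorstSupported.rel_or_eq [Std.Trichotomous p] (ha : IsWorstSupported x p a)
    (ho : 0 < x o) : p o a ∨ o = a := by
  rcases trichotomous_of p o a with h | h | h
  · exact Or.inl h
  · exact Or.inr h
  · exact absurd (ha.2 o h) ho.ne'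

theorem IsWorstSupported.unique [Std.Trichotomous p] (ha : IsWorstSupported x p a)
    (hb : IsWorstSupported x p b) : a = b := by
  rcases ha.rel_or_eq hb.1 with h | h
  · exact absurd (hb.2 a h) ha.1.ne'
  · exact h.symm

theorem IsWorstSupported.eq_of_swap [Std.Trichotomous p] (hworst : IsWorstSupported x p a)
    (hbest : IsWorstSupported x (Function.swap p) a) (ho : 0 < x o) : o = a := by
  rcases hworst.rel_or_eq ho with h | h
  · exact absurd (hbest.2 o h) ho.ne'
  · exact h

theorem isWorstSupported_of_forall_ne [Std.Irrefl p] (ha : 0 < x a)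
    (h : ∀ o, o ≠ a → x o = 0) : IsWorstSupported x p a :=
  ⟨ha, fun o hao => h o fun hoa => irrefl_of p a (hoa ▸ hao)⟩

end Support

section Lottery

variable {O : Type*} [Fintype O] {x : O → ℝ} {p : O → O → Prop} {a o : O}

theorem IsLottery.exists_pos (hx : IsLottery x) : ∃ o, 0 < x o := by
  obtain ⟨o, -, ho⟩ := Finset.exists_lt_of_sum_lt (f := fun _ => (0 : ℝ)) (g := x)
    (s := univ) (by simp [hx.2])
  exact ⟨o, ho⟩

theorem IsLottery.exists_isWorstSupported [IsTrans O p] [Std.Irrefl p] (hx : IsLottery x) :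
    ∃ o, IsWorstSupported x p o := by
  obtain ⟨o, ho, hmin⟩ := (Finite.wellFounded_of_trans_of_irrefl (Function.swap p)).has_min
    {o | 0 < x o} hx.exists_pos
  exact ⟨o, ho, fun o' ho' => le_antisymm (not_lt.1 fun h => hmin o' h ho') (hx.1 o')⟩

theorem IsLottery.eq_of_apply_eq_one (hx : IsLottery x) (ha : x a = 1) (ho : 0 < x o) :
    o = a := by
  by_contra hne
  have := Finset.add_le_sum (fun k _ => hx.1 k) (mem_univ a) (mem_univ o) (Ne.symm hne)
  linarith [hx.2]

theorem IsLottery.apply_eq_ite (hx : IsLottery x) (h : ∀ o, 0 < x o → o = a) (o : O) :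
    x o = if o = a then 1 else 0 := by
  have hzero : ∀ o, o ≠ a → x o = 0 := fun o hne =>
    le_antisymm (not_lt.1 fun hpos => hne (h o hpos)) (hx.1 o)
  split_ifs with hoa
  · rw [hoa, ← hx.2, Finset.sum_eq_single a (fun o _ => hzero o) (by simp)]
  · exact hzero o hoa

theorem isRep_zero_iff [Std.Irrefl p] (hx0 : ∀ o, 0 ≤ x o) :
    IsRep x p 0 o ↔ IsWorstSupported x p o := by
  have hw : wWorse x p o = x o + sWorse x p o := by
    rw [wWorse, sWorse, ← Finset.sum_insert (by simp [irrefl_of p o])]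
    congr 1
    ext o'
    simp [or_comm]
  have hs : sWorse x p o = 0 ↔ ∀ o', p o o' → x o' = 0 := by
    rw [sWorse, Finset.sum_eq_zero_iff_of_nonneg fun o' _ => hx0 o']
    simp
  have hs0 : 0 ≤ sWorse x p o := Finset.sum_nonneg fun o' _ => hx0 o'
  simp only [IsRep, IsWorstSupported, hw, zero_ne_one, false_and, zero_lt_one, true_and,
    false_or, ← hs]
  constructor
  · rintro ⟨hle, hlt⟩
    have hzero : sWorse x p o = 0 := le_antisymm hle hs0
    exact ⟨by linarith, hzero⟩
  · rintro ⟨hpos, hzero⟩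
    exact ⟨hzero.le, by linarith⟩

end Lottery

section Matching

variable {N M : Type*}

noncomputable def matchingMatrix (μ : N ≃ M) : N → M → ℝ := fun i j => if μ i = j then 1 else 0

theorem matchingMatrix_apply_eq_ite_symm (μ : N ≃ M) (i : N) (j : M) :
    matchingMatrix μ i j = if i = μ.symm j then 1 else 0 := by
  simp only [matchingMatrix, Equiv.eq_symm_apply]

theorem isWorstSupported_matchingMatrix_row {p : M → M → Prop} [Std.Irrefl p] (μ : N ≃ M)
    (i : N) : IsWorstSupported (matchingMatrix μ i) p (μ i) :=
  isWorstSupported_of_forall_ne (by simp [matchingMatrix]) fun j hj => by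
    simp [matchingMatrix, Ne.symm hj]

theorem isWorstSupported_matchingMatrix_col {p : N → N → Prop} [Std.Irrefl p] (μ : N ≃ M)
    (j : M) : IsWorstSupported (fun k => matchingMatrix μ k j) p (μ.symm j) :=
  isWorstSupported_of_forall_ne (by simp [matchingMatrix_apply_eq_ite_symm]) fun k hk => by
    simp [matchingMatrix_apply_eq_ite_symm, hk]

end Matching

section TwoSided

variable {N M : Type*} [Fintype N] [Fintype M] {pN : N → M → M → Prop}
  {pM : M → N → N → Prop} {x : N → M → ℝ}

theorem IsDS.row (hx : IsDS x) (i : N) : IsLottery (x i) :=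
  ⟨hx.1 i, hx.2.1 i⟩

theorem IsDS.col (hx : IsDS x) (j : M) : IsLottery (fun k => x k j) :=
  ⟨fun k => hx.1 k j, hx.2.2 j⟩

theorem isDS_matchingMatrix (μ : N ≃ M) : IsDS (matchingMatrix μ) := by
  refine ⟨fun i j => by unfold matchingMatrix; split_ifs <;> norm_num, fun i => ?_, fun j => ?_⟩
  · simp [matchingMatrix]
  · simp [matchingMatrix_apply_eq_ite_symm]

variable [∀ i, IsStrictTotalOrder M (pN i)] [∀ j, IsStrictTotalOrder N (pM j)]

theorem TwoStable.eq_or_eq_of_pos (hstab : TwoStable pN pM (fun _ => 0) (fun _ => 0) x)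
    (hx : IsDS x) {i : N} {j : M} {u : M} {v : N} (hu : IsWorstSupported (x i) (pN i) u)
    (hv : IsWorstSupported (fun k => x k j) (pM j) v) (hij : 0 < x i j) : u = j ∨ v = i := by
  have hrep := hstab i j u v ((isRep_zero_iff (hx.row i).1).2 hu)
    ((isRep_zero_iff (hx.col j).1).2 hv)
  by_contra! hne
  have hju := (hu.rel_or_eq hij).resolve_right (Ne.symm hne.1)
  have hiv := (hv.rel_or_eq (o := i) hij).resolve_right (Ne.symm hne.2)
  rcases hrep with (h | h) | (h | h)
  · exact asymm_of _ h hju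
  · exact hne.1 h
  · exact asymm_of _ h hiv
  · exact hne.2 h

theorem TwoStable.eq_of_isWorstSupported_swap
    (hstab : TwoStable pN pM (fun _ => 0) (fun _ => 0) x) (hx : IsDS x) {j : M} {b : N} {u : M}
    (hb : IsWorstSupported (fun k => x k j) (Function.swap (pM j)) b)
    (hu : IsWorstSupported (x b) (pN b) u) : u = j := by
  obtain ⟨v, hv⟩ := (hx.col j).exists_isWorstSupported (p := pM j)
  rcases hstab.eq_or_eq_of_pos hx hu hv hb.1 with huj | rfl
  · exact huj
  · have hcol : x v j = 1 := by
      simpa using (hx.col j).apply_eq_ite (fun k hk => hv.eq_of_swap hb hk) v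
    exact (hx.row v).eq_of_apply_eq_one hcol hu.1

theorem intStable_of_twoStable_matchingMatrix {μ : N ≃ M}
    (hstab : TwoStable pN pM (fun _ => 0) (fun _ => 0) (matchingMatrix μ)) :
    IntStable pN pM μ := by
  rintro i j ⟨hi, hj⟩
  have hy := isDS_matchingMatrix μ
  rcases hstab i j (μ i) (μ.symm j)
      ((isRep_zero_iff (hy.row i).1).2 (isWorstSupported_matchingMatrix_row μ i))
      ((isRep_zero_iff (hy.col j).1).2 (isWorstSupported_matchingMatrix_col μ j))
    with (h | h) | (h | h)
  · exact asymm_of _ h hi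
  · exact irrefl_of (pN i) j (h ▸ hi)
  · exact asymm_of _ h hj
  · exact irrefl_of (pM j) i (h ▸ hj)

theorem twoDom_matchingMatrix (hx : IsDS x) {μ : N ≃ M}
    (hrow : ∀ i, IsWorstSupported (x i) (pN i) (μ i))
    (hbest : ∀ j, IsWorstSupported (fun k => x k j) (Function.swap (pM j)) (μ.symm j))
    {j₀ : M} {v₀ : N} (hv₀ : IsWorstSupported (fun k => x k j₀) (pM j₀) v₀)
    (hne : v₀ ≠ μ.symm j₀) :
    TwoDom pN pM (fun _ => 0) (fun _ => 0) (matchingMatrix μ) x := by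
  have hy := isDS_matchingMatrix μ
  have hbetter : ∀ j v, IsWorstSupported (fun k => x k j) (pM j) v →
      pM j (μ.symm j) v ∨ μ.symm j = v := fun j v hv =>
    ((hbest j).rel_or_eq hv.1).imp id Eq.symm
  refine ⟨fun i u v hu hv => Or.inr ?_, fun j u v hu hv => ?_, Or.inr ⟨j₀, μ.symm j₀, v₀,
    (isRep_zero_iff (hy.col j₀).1).2 (isWorstSupported_matchingMatrix_col μ j₀),
    (isRep_zero_iff (hx.col j₀).1).2 hv₀,
    (hbetter j₀ v₀ hv₀).resolve_right (Ne.symm hne)⟩⟩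
  · rw [((isRep_zero_iff (hy.row i).1).1 hu).unique (isWorstSupported_matchingMatrix_row μ i),
      ((isRep_zero_iff (hx.row i).1).1 hv).unique (hrow i)]
  · rw [((isRep_zero_iff (hy.col j).1).1 hu).unique (isWorstSupported_matchingMatrix_col μ j)]
    exact hbetter j v ((isRep_zero_iff (hx.col j).1).1 hv)

end TwoSided

/-- When all quantile parameters are 0, any stable lottery that is efficient must be
integral, i.e., it coincides with a single deterministic stable matching. -/
theorem stmt17 {N M : Type*} [Fintype N] [Fintype M]
    (hcard : Fintype.card N = Fintype.card M)
    (pN : N → M → M → Prop) (pM : M → N → N → Prop)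
    (hpN : ∀ i, IsStrictTotalOrder M (pN i)) (hpM : ∀ j, IsStrictTotalOrder N (pM j))
    (x : N → M → ℝ) (hx : IsDS x)
    (hstab : TwoStable pN pM (fun _ => 0) (fun _ => 0) x)
    (heff : ¬ ∃ y : N → M → ℝ, IsDS y ∧ TwoDom pN pM (fun _ => 0) (fun _ => 0) y x) :
    ∃ μ : N ≃ M, (∀ i j, x i j = if μ i = j then 1 else 0) ∧ IntStable pN pM μ := by
  choose u hu using fun i => (hx.row i).exists_isWorstSupported (p := pN i)
  choose b hb using fun j => (hx.col j).exists_isWorstSupported (p := Function.swap (pM j))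
  have hub : ∀ j, u (b j) = j := fun j => hstab.eq_of_isWorstSupported_swap hx (hb j) (hu (b j))
  let μ : N ≃ M := Equiv.ofBijective u
    ((Fintype.bijective_iff_surjective_and_card u).2 ⟨fun j => ⟨b j, hub j⟩, hcard⟩)
  have hbest : ∀ j, IsWorstSupported (fun k => x k j) (Function.swap (pM j)) (μ.symm j) :=
    fun j => μ.eq_symm_apply.2 (hub j) ▸ hb j
  have hworst : ∀ j, IsWorstSupported (fun k => x k j) (pM j) (μ.symm j) := by
    intro j
    obtain ⟨v, hv⟩ := (hx.col j).exists_isWorstSupported (p := pM j)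
    by_cases hvμ : v = μ.symm j
    · exact hvμ ▸ hv
    · exact absurd ⟨_, isDS_matchingMatrix μ,
        twoDom_matchingMatrix hx hu hbest hv hvμ⟩ heff
  have hxμ : x = matchingMatrix μ := funext₂ fun i j => by
    rw [matchingMatrix_apply_eq_ite_symm,
      (hx.col j).apply_eq_ite (fun k hk => (hworst j).eq_of_swap (hbest j) hk) i]
  exact ⟨μ, fun i j => congrFun₂ hxμ i j, intStable_of_twoStable_matchingMatrix (hxμ ▸ hstab)⟩
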